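/- arXiv:math/0204058 — 2 statements merged into one kernel-verified Lean document; each statement's English description precedes it below -/
import Mathlib

section
/- Define on G = ℤ × ℤ the operation (x₁, x₂) ⋆ (y₁, y₂) = (z₁, z₂) where z₁ = x₁ + y₁ and z₂ is determined by 2z₁ + z₂ = (2x₁ + x₂) + (2y₁ + y₂), i.e., z₂ = x₂ + y₂. More interestingly, on a 2-step nilpotent group N with lower central series N ⊇ N², define on N × N² the operation (x₁,x₂) ⋆ (y₁,y₂) = (z₁,z₂) by z₁ = x₁y₁ and z₁²z₂ = x₁²x₂y₁²y₂. Then this operation makes N × N² into a group. -/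
/-- The Leibman product on `N × N²`: `(x₁,x₂) ⋆ (y₁,y₂) = (z₁,z₂)` where
`z₁ = x₁y₁` and `z₁²z₂ = x₁²x₂y₁²y₂`. -/
def leib {N : Type*} [Group N] (p q : N × N) : N × N :=
  (p.1 * q.1, (p.1 * q.1)⁻¹ * (p.1 * q.1)⁻¹ * (p.1 ^ 2 * p.2 * (q.1 ^ 2 * q.2)))

/-!
The map `(x, u) ↦ (x, x² u)` conjugates the Leibman product into the direct product of `N × N`,
so associativity, the identity and inverses are transported from that group. It identifies
`N × [N, N]` with the pairs `(x, w)` satisfying `w ≡ x²` modulo `[N, N]`, a subgroup of `N × N`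
because `N / [N, N]` is abelian; this gives closure.
-/

namespace Leibman

variable {N : Type*} [Group N]

def shear : N × N ≃ N × N where
  toFun p := (p.1, p.1 ^ 2 * p.2)
  invFun p := (p.1, (p.1 ^ 2)⁻¹ * p.2)
  left_inv p := by simp
  right_inv p := by simp

theorem leib_eq_shear_symm_mul (p q : N × N) :
    leib p q = shear.symm (shear p * shear q) := by
  simp only [leib, shear, Equiv.coe_fn_mk, Equiv.coe_fn_symm_mk, Prod.fst_mul, Prod.snd_mul,
    Prod.mk.injEq, true_and, pow_two]
  group

@[simp]
theorem shear_one : shear (1 : N × N) = 1 := by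
  simp [shear]

@[simp]
theorem shear_symm_one : shear.symm (1 : N × N) = 1 :=
  shear.symm_apply_eq.mpr shear_one.symm

variable (N) in
def squareCongrSubgroup : Subgroup (N × N) :=
  (Abelianization.of.comp (MonoidHom.snd N N)).eqLocus
    ((powMonoidHom 2).comp (Abelianization.of.comp (MonoidHom.fst N N)))

theorem shear_mem_squareCongrSubgroup_iff (p : N × N) :
    shear p ∈ squareCongrSubgroup N ↔ p.2 ∈ commutator N := by
  rw [← Abelianization.ker_of, MonoidHom.mem_ker]
  change Abelianization.of (p.1 ^ 2 * p.2) = Abelianization.of p.1 ^ 2 ↔ _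
  rw [map_mul, map_pow, mul_eq_left]

end Leibman

open scoped commutatorElement

theorem stmt_12_general {N : Type*} [Group N] :
    -- the toy example on ℤ × ℤ: z₂ = x₂ + y₂
    (∀ x₁ x₂ y₁ y₂ : ℤ, 2 * (x₁ + y₁) + (x₂ + y₂) = (2 * x₁ + x₂) + (2 * y₁ + y₂)) ∧
    -- closure: the second coordinate stays in N² = [N,N]
    (∀ p q : N × N, p.2 ∈ commutator N → q.2 ∈ commutator N →
      (leib p q).2 ∈ commutator N) ∧
    -- associativity
    (∀ p q r : N × N, leib (leib p q) r = leib p (leib q r)) ∧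
    -- identity
    (∀ p : N × N, leib ((1 : N), (1 : N)) p = p ∧ leib p ((1 : N), (1 : N)) = p) ∧
    -- inverses
    (∀ p : N × N, p.2 ∈ commutator N → ∃ q : N × N, q.2 ∈ commutator N ∧
      leib p q = ((1 : N), (1 : N)) ∧ leib q p = ((1 : N), (1 : N))) := by
  open Leibman in
  simp only [← shear_mem_squareCongrSubgroup_iff, leib_eq_shear_symm_mul, Prod.mk_one_one]
  refine ⟨fun _ _ _ _ ↦ by ring, fun p q hp hq ↦ ?_, fun p q r ↦ ?_, fun p ↦ ?_, fun p hp ↦ ?_⟩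
  · simpa using mul_mem hp hq
  · simp [mul_assoc]
  · simp
  · refine ⟨Leibman.shear.symm (Leibman.shear p)⁻¹, by simpa using inv_mem hp, ?_, ?_⟩ <;>
      simp

theorem stmt_12 {N : Type*} [Group N]
    (h2 : ∀ a b : N, ⁅a, b⁆ ∈ Subgroup.center N) :
    -- the toy example on ℤ × ℤ: z₂ = x₂ + y₂
    (∀ x₁ x₂ y₁ y₂ : ℤ, 2 * (x₁ + y₁) + (x₂ + y₂) = (2 * x₁ + x₂) + (2 * y₁ + y₂)) ∧
    -- closure: the second coordinate stays in N² = [N,N]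
    (∀ p q : N × N, p.2 ∈ commutator N → q.2 ∈ commutator N →
      (leib p q).2 ∈ commutator N) ∧
    -- associativity
    (∀ p q r : N × N, leib (leib p q) r = leib p (leib q r)) ∧
    -- identity
    (∀ p : N × N, leib ((1 : N), (1 : N)) p = p ∧ leib p ((1 : N), (1 : N)) = p) ∧
    -- inverses
    (∀ p : N × N, p.2 ∈ commutator N → ∃ q : N × N, q.2 ∈ commutator N ∧
      leib p q = ((1 : N), (1 : N)) ∧ leib q p = ((1 : N), (1 : N))) :=
  stmt_12_general
end

section
/- Let N be a nilpotent group of class at most 2 with N² central, a, x ∈ N. Define S on N × N² (with the Leibman product ⋆) by S(y₁, y₂) = (a[a,x], e) ⋆ (y₁, y₂), and let I(y₁,y₂) = (xy₁Γ, xy₁²y₂Γ, xy₁³y₂³Γ) for a subgroup Γ ≤ N. Then I(S(y₁,y₂)) = (axy₁Γ, a²xy₁²y₂Γ, a³xy₁³y₂³Γ); that is, I intertwines S with the diagonal-type action (zΓ, wΓ, uΓ) ↦ (azΓ, a²wΓ, a³uΓ). -/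
/-- The map `I(y₁,y₂) = (xy₁Γ, xy₁²y₂Γ, xy₁³y₂³Γ)`. -/
def Imap {N : Type*} [Group N] (Γ : Subgroup N) (x : N) (p : N × N) :
    (N ⧸ Γ) × (N ⧸ Γ) × (N ⧸ Γ) :=
  (↑(x * p.1), ↑(x * p.1 ^ 2 * p.2), ↑(x * p.1 ^ 3 * p.2 ^ 3))

open scoped commutatorElement

section CentralCommutator

variable {G : Type*} [Group G] {g h : G}

lemma mul_inv_conj_pow (a x : G) (n : ℕ) : x * (x⁻¹ * a * x) ^ n = a ^ n * x := by
  simpa [mul_assoc] using congrArg (x * ·) (conj_pow (a := x⁻¹) (b := a) (i := n))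

lemma pow_mul_eq_mul_pow_mul_commutatorElement_pow (hc : ⁅h, g⁆ ∈ Subgroup.center G) (n : ℕ) :
    h ^ n * g = g * h ^ n * ⁅h, g⁆ ^ n := by
  have hcomm : ∀ z, z * ⁅h, g⁆ = ⁅h, g⁆ * z := Subgroup.mem_center_iff.mp hc
  have hhg : h * g = g * h * ⁅h, g⁆ := by
    rw [hcomm, commutatorElement_def]; group
  induction n with
  | zero => simp
  | succ n ih =>
    calc h ^ (n + 1) * g = h * g * h ^ n * ⁅h, g⁆ ^ n := by
          rw [pow_succ', mul_assoc, ih]; simp only [mul_assoc]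
      _ = g * h * h ^ n * (⁅h, g⁆ * ⁅h, g⁆ ^ n) := by
          rw [hhg, mul_assoc (g * h), ← hcomm]; simp only [mul_assoc]
      _ = g * h ^ (n + 1) * ⁅h, g⁆ ^ (n + 1) := by
          rw [pow_succ', pow_succ']; simp only [mul_assoc]

lemma mul_pow_of_commutatorElement_mem_center (hc : ⁅h, g⁆ ∈ Subgroup.center G) (n : ℕ) :
    (g * h) ^ n = g ^ n * h ^ n * ⁅h, g⁆ ^ n.choose 2 := by
  induction n with
  | zero => simp
  | succ n ih =>
    have hcommC : ∀ z, z * ⁅h, g⁆ ^ n.choose 2 = ⁅h, g⁆ ^ n.choose 2 * z :=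
      Subgroup.mem_center_iff.mp (Subgroup.pow_mem _ hc _)
    have hcommn : Commute h (⁅h, g⁆ ^ n) :=
      Subgroup.mem_center_iff.mp (Subgroup.pow_mem _ hc _) h
    calc (g * h) ^ (n + 1) = g ^ n * (h ^ n * g) * h * ⁅h, g⁆ ^ n.choose 2 := by
          rw [pow_succ, ih, mul_assoc (g ^ n * h ^ n), ← hcommC]; simp only [mul_assoc]
      _ = g ^ (n + 1) * h ^ (n + 1) * (⁅h, g⁆ ^ n * ⁅h, g⁆ ^ n.choose 2) := by
          rw [pow_mul_eq_mul_pow_mul_commutatorElement_pow hc, pow_succ, pow_succ]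
          simp only [mul_assoc]
          rw [← hcommn.left_comm]
      _ = g ^ (n + 1) * h ^ (n + 1) * ⁅h, g⁆ ^ (n + 1).choose 2 := by
          rw [Nat.choose_succ_succ, Nat.choose_one_right, pow_add ⁅h, g⁆]

lemma leib_one_snd (hc : ⁅h, g⁆ ∈ Subgroup.center G) (y : G) :
    (leib (g, 1) (h, y)).2 = ⁅h, g⁆⁻¹ * y := by
  simp only [leib]
  rw [← mul_inv_rev, ← sq, mul_pow_of_commutatorElement_mem_center hc, Nat.choose_self, pow_one]
  generalize ⁅h, g⁆ = c
  group

lemma Imap_leib_one (Γ : Subgroup G) (x : G) (hc : ⁅h, g⁆ ∈ Subgroup.center G) {y : G}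
    (hy : y ∈ Subgroup.center G) :
    Imap Γ x (leib (g, 1) (h, y)) =
      (↑(x * g * h), ↑(x * g ^ 2 * h ^ 2 * y), ↑(x * g ^ 3 * h ^ 3 * y ^ 3)) := by
  have hcy : Commute ⁅h, g⁆⁻¹ y := Subgroup.mem_center_iff.mp hy _
  have hchoose : Nat.choose 3 2 = 3 := rfl
  simp only [Imap, leib_one_snd hc]
  simp only [leib, hcy.mul_pow, mul_pow_of_commutatorElement_mem_center hc, Nat.choose_self,
    hchoose]
  generalize ⁅h, g⁆ = c
  simp only [Prod.mk.injEq]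
  refine ⟨?_, ?_, ?_⟩ <;> congr 1 <;> group

end CentralCommutator

/-- `I` intertwines `S(y) = (a[a,x], e) ⋆ y` with
`(zΓ, wΓ, uΓ) ↦ (azΓ, a²wΓ, a³uΓ)`, where `[a,x] = a⁻¹x⁻¹ax`. -/
theorem stmt_15 {N : Type*} [Group N]
    (h2 : ∀ g h : N, ⁅g, h⁆ ∈ Subgroup.center N)
    (Γ : Subgroup N) (a x : N) (p : N × N) (hp2 : p.2 ∈ commutator N) :
    Imap Γ x (leib (a * (a⁻¹ * x⁻¹ * a * x), (1 : N)) p) =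
      (↑(a * x * p.1), ↑(a ^ 2 * x * p.1 ^ 2 * p.2), ↑(a ^ 3 * x * p.1 ^ 3 * p.2 ^ 3)) := by
  have hp2_central : p.2 ∈ Subgroup.center N :=
    Subgroup.commutator_le.mpr (fun g _ h _ => h2 g h) hp2
  rw [show a * (a⁻¹ * x⁻¹ * a * x) = x⁻¹ * a * x by group,
    Imap_leib_one Γ x (h2 _ _) hp2_central, mul_inv_conj_pow, mul_inv_conj_pow,
    show x * (x⁻¹ * a * x) = a * x by group]
end
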